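/- Let Z₁, Z₂, Z₃, Z₄ be invertible n×n complex matrices, let B₁, B₂ be 2n×2n complex matrices, and let C₁, C₂, C₃, C₄ be n×n complex matrices. Define the 4n×4n matrix Z with 2×2 block structure Z = [[Z¹, B₁], [B₂, Z²]], where Z¹ = [[Z₁, C₁], [C₂, Z₂]] and Z² = [[Z₃, C₃], [C₄, Z₄]]. Let D = diag(Z₁, Z₂, Z₃, Z₄), let Z̄₁ = diag([[I, Z₁⁻¹·C₁], [Z₂⁻¹·C₂, I]], [[I, Z₃⁻¹·C₃], [Z₄⁻¹·C₄, I]]), assume Z̄₁ is invertible, and let Z̄₀ = [[I₂ₙ, B̄₁], [B̄₂, I₂ₙ]] with B̄₁ = (the upper-left 2n×2n block of Z̄₁)⁻¹ · D₁⁻¹ · B₁ and B̄₂ = (the lower-right 2n×2n block of Z̄₁)⁻¹ · D₂⁻¹ · B₂, where D₁ = diag(Z₁, Z₂) and D₂ = diag(Z₃, Z₄). Then Z = D · Z̄₁ · Z̄₀. -/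
import Mathlib


open Matrix

theorem stmt_1 (n : ℕ)
    (Z₁ Z₂ Z₃ Z₄ : Matrix (Fin n) (Fin n) ℂ)
    (hZ₁ : IsUnit Z₁) (hZ₂ : IsUnit Z₂) (hZ₃ : IsUnit Z₃) (hZ₄ : IsUnit Z₄)
    (B₁ B₂ : Matrix (Fin n ⊕ Fin n) (Fin n ⊕ Fin n) ℂ)
    (C₁ C₂ C₃ C₄ : Matrix (Fin n) (Fin n) ℂ)
    (Z : Matrix ((Fin n ⊕ Fin n) ⊕ (Fin n ⊕ Fin n)) ((Fin n ⊕ Fin n) ⊕ (Fin n ⊕ Fin n)) ℂ)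
    (hZ : Z = fromBlocks (fromBlocks Z₁ C₁ C₂ Z₂) B₁ B₂ (fromBlocks Z₃ C₃ C₄ Z₄))
    (D₁ D₂ : Matrix (Fin n ⊕ Fin n) (Fin n ⊕ Fin n) ℂ)
    (hD₁ : D₁ = fromBlocks Z₁ 0 0 Z₂) (hD₂ : D₂ = fromBlocks Z₃ 0 0 Z₄)
    (D : Matrix ((Fin n ⊕ Fin n) ⊕ (Fin n ⊕ Fin n)) ((Fin n ⊕ Fin n) ⊕ (Fin n ⊕ Fin n)) ℂ)
    (hD : D = fromBlocks D₁ 0 0 D₂)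
    (W₁ W₂ : Matrix (Fin n ⊕ Fin n) (Fin n ⊕ Fin n) ℂ)
    (hW₁ : W₁ = fromBlocks 1 (Z₁⁻¹ * C₁) (Z₂⁻¹ * C₂) 1)
    (hW₂ : W₂ = fromBlocks 1 (Z₃⁻¹ * C₃) (Z₄⁻¹ * C₄) 1)
    (Zbar₁ : Matrix ((Fin n ⊕ Fin n) ⊕ (Fin n ⊕ Fin n)) ((Fin n ⊕ Fin n) ⊕ (Fin n ⊕ Fin n)) ℂ)
    (hZbar₁ : Zbar₁ = fromBlocks W₁ 0 0 W₂)
    (hZbar₁unit : IsUnit Zbar₁)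
    (Bbar₁ Bbar₂ : Matrix (Fin n ⊕ Fin n) (Fin n ⊕ Fin n) ℂ)
    (hBbar₁ : Bbar₁ = W₁⁻¹ * D₁⁻¹ * B₁)
    (hBbar₂ : Bbar₂ = W₂⁻¹ * D₂⁻¹ * B₂)
    (Zbar₀ : Matrix ((Fin n ⊕ Fin n) ⊕ (Fin n ⊕ Fin n)) ((Fin n ⊕ Fin n) ⊕ (Fin n ⊕ Fin n)) ℂ)
    (hZbar₀ : Zbar₀ = fromBlocks 1 Bbar₁ Bbar₂ 1) :
    Z = D * Zbar₁ * Zbar₀ := by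
  -- W₁, W₂ are units
  rw [Matrix.isUnit_iff_isUnit_det, hZbar₁, Matrix.det_fromBlocks_zero₂₁] at hZbar₁unit
  have hW₁u : IsUnit W₁ := Matrix.isUnit_iff_isUnit_det _ |>.2 (isUnit_of_mul_isUnit_left hZbar₁unit)
  have hW₂u : IsUnit W₂ := Matrix.isUnit_iff_isUnit_det _ |>.2 (isUnit_of_mul_isUnit_right hZbar₁unit)
  -- D₁, D₂ are units
  have hD₁u : IsUnit D₁ := by
    rw [Matrix.isUnit_iff_isUnit_det, hD₁, Matrix.det_fromBlocks_zero₂₁]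
    exact ((Matrix.isUnit_iff_isUnit_det _).1 hZ₁).mul ((Matrix.isUnit_iff_isUnit_det _).1 hZ₂)
  have hD₂u : IsUnit D₂ := by
    rw [Matrix.isUnit_iff_isUnit_det, hD₂, Matrix.det_fromBlocks_zero₂₁]
    exact ((Matrix.isUnit_iff_isUnit_det _).1 hZ₃).mul ((Matrix.isUnit_iff_isUnit_det _).1 hZ₄)
  have h1 : D₁ * W₁ = fromBlocks Z₁ C₁ C₂ Z₂ := by
    rw [hD₁, hW₁, Matrix.fromBlocks_multiply]
    simp [← Matrix.mul_assoc,
      Matrix.mul_nonsing_inv _ ((Matrix.isUnit_iff_isUnit_det _).1 hZ₁),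
      Matrix.mul_nonsing_inv _ ((Matrix.isUnit_iff_isUnit_det _).1 hZ₂)]
  have h2 : D₂ * W₂ = fromBlocks Z₃ C₃ C₄ Z₄ := by
    rw [hD₂, hW₂, Matrix.fromBlocks_multiply]
    simp [← Matrix.mul_assoc,
      Matrix.mul_nonsing_inv _ ((Matrix.isUnit_iff_isUnit_det _).1 hZ₃),
      Matrix.mul_nonsing_inv _ ((Matrix.isUnit_iff_isUnit_det _).1 hZ₄)]
  have hb1 : D₁ * W₁ * Bbar₁ = B₁ := by
    rw [hBbar₁]
    rw [Matrix.mul_assoc D₁ W₁, ← Matrix.mul_assoc W₁, ← Matrix.mul_assoc W₁,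
      Matrix.mul_nonsing_inv _ ((Matrix.isUnit_iff_isUnit_det _).1 hW₁u), Matrix.one_mul,
      ← Matrix.mul_assoc, Matrix.mul_nonsing_inv _ ((Matrix.isUnit_iff_isUnit_det _).1 hD₁u),
      Matrix.one_mul]
  have hb2 : D₂ * W₂ * Bbar₂ = B₂ := by
    rw [hBbar₂]
    rw [Matrix.mul_assoc D₂ W₂, ← Matrix.mul_assoc W₂, ← Matrix.mul_assoc W₂,
      Matrix.mul_nonsing_inv _ ((Matrix.isUnit_iff_isUnit_det _).1 hW₂u), Matrix.one_mul,
      ← Matrix.mul_assoc, Matrix.mul_nonsing_inv _ ((Matrix.isUnit_iff_isUnit_det _).1 hD₂u),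
      Matrix.one_mul]
  rw [hZ, hD, hZbar₁, hZbar₀, Matrix.fromBlocks_multiply, Matrix.fromBlocks_multiply]
  simp only [Matrix.mul_one, Matrix.mul_zero, Matrix.zero_mul, add_zero, zero_add, h1, h2]
  rw [← h1, ← h2, hb1, hb2]
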